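/- If ω is uniformly distributed on [0,1], then the cumulative distribution function of τ(ω) at a point t ∈ [0, 1/2] equals (1 − √(1 − 2t))/2; in particular τ(ω) ≤ 1/2 with probability 1/2. -/
import Mathlib


open MeasureTheory

noncomputable def tau (ω : ℝ) : ℝ :=
  if ω ≤ 1/2 then 2*ω*(1-ω) else 1 - 2*ω*(1-ω)

lemma tau_cdf_aux (t : ℝ) (ht : t ∈ Set.Icc (0:ℝ) (1/2)) :
    volume {ω ∈ Set.Icc (0:ℝ) 1 | tau ω ≤ t} =
      ENNReal.ofReal ((1 - Real.sqrt (1 - 2*t)) / 2) := by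
  obtain ⟨ht0, ht1⟩ := ht
  set s := Real.sqrt (1 - 2*t) with hs
  have hs0 : 0 ≤ s := Real.sqrt_nonneg _
  have hs2 : s^2 = 1 - 2*t := Real.sq_sqrt (by linarith)
  have hs1 : s ≤ 1 := by nlinarith
  have hset : {ω ∈ Set.Icc (0:ℝ) 1 | tau ω ≤ t} = Set.Icc 0 ((1 - s)/2) := by
    ext ω
    simp only [Set.mem_setOf_eq, Set.mem_Icc, tau]
    constructor
    · rintro ⟨⟨h0, h1⟩, hτ⟩
      refine ⟨h0, ?_⟩
      by_cases hω : ω ≤ 1/2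
      · rw [if_pos hω] at hτ
        by_contra hc
        push_neg at hc
        nlinarith
      · rw [if_neg hω] at hτ
        push_neg at hω
        nlinarith
    · rintro ⟨h0, h1⟩
      have hω : ω ≤ 1/2 := by linarith
      refine ⟨⟨h0, by linarith⟩, ?_⟩
      rw [if_pos hω]
      nlinarith
  rw [hset, Real.volume_Icc]
  norm_num

theorem tau_cdf (t : ℝ) (ht : t ∈ Set.Icc (0:ℝ) (1/2)) :
    volume {ω ∈ Set.Icc (0:ℝ) 1 | tau ω ≤ t} =
      ENNReal.ofReal ((1 - Real.sqrt (1 - 2*t)) / 2) ∧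
    volume {ω ∈ Set.Icc (0:ℝ) 1 | tau ω ≤ 1/2} = ENNReal.ofReal (1/2) := by
  refine ⟨tau_cdf_aux t ht, ?_⟩
  have := tau_cdf_aux (1/2) (by norm_num)
  simpa using this
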